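/- arXiv:2312.01162 — 3 statements merged into one kernel-verified Lean document; each statement's English description precedes it below -/
import Mathlib

section
/- High-dimensional Freedman inequality: Let A be a nonempty finite index set. For each a ∈ A let (ξ_{a,i})_{i=1}^n be a square-integrable martingale difference sequence with respect to the filtration (F_i)_{i=0}^n (i.e. each ξ_{a,i} is F_i-measurable, square integrable, and E[ξ_{a,i} | F_{i-1}] = 0 almost surely). Set M_a = Σ_{i=1}^n ξ_{a,i} and V_a = Σ_{i=1}^n E[ξ_{a,i}² | F_{i-1}]. Then for all z, u, v > 0: P( max_{a∈A} |M_a| ≥ z ) ≤ Σ_{i=1}^n P( max_{a∈A} |ξ_{a,i}| ≥ u ) + 2 P( max_{a∈A} V_a ≥ v ) + 2 |A| · exp( − z² / (2zu + 2v) ). -/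
/-!
Fix one coordinate and truncate its increments to `Xᵢ = min ξᵢ u`. With `λ = z / (zu + v)` and
`c = λ² e^{λu} / 2`, the bound `eʸ ≤ 1 + y + y²/2 · e^{λu}` for `y ≤ λu ≤ 1`, together with
`E[Xᵢ | ℱᵢ₋₁] ≤ E[ξᵢ | ℱᵢ₋₁] = 0` and `Xᵢ² ≤ ξᵢ²`, gives
`E[exp (λXᵢ - c E[ξᵢ² | ℱᵢ₋₁]) | ℱᵢ₋₁] ≤ 1`, so the product of these factors has expectation at
most `1`. On the event `{∑ ξᵢ ≥ z, all ξᵢ ≤ u, V ≤ v}` the truncation is invisible and the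
product is at least `e^{λz - cv}`; Markov's inequality and `e^{λu} ≤ (zu + v) / v` bound the
event by `exp (-z² / (2zu + 2v))`. Apply this to `±ξ_a` for every coordinate `a`: if
`max_a |M_a| ≥ z`, then either some `max_a |ξ_{a,i}|` is at least `u`, or `max_a V_a ≥ v`, or
one coordinate realises such an event.
-/

open MeasureTheory Finset
open scoped ENNReal

theorem Real.exp_le_one_add_add_sq_div_two_of_nonpos {y : ℝ} (hy : y ≤ 0) :
    Real.exp y ≤ 1 + y + y ^ 2 / 2 := by
  rcases le_or_gt y (-1) with hy1 | hy1
  · have h : Real.exp (-1) ≤ 1 / 2 := by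
      rw [Real.exp_neg, inv_le_comm₀ (Real.exp_pos 1) (by norm_num)]
      linarith [Real.add_one_le_exp (1 : ℝ)]
    nlinarith [Real.exp_le_exp.2 hy1]
  · have h := (abs_le.1 (Real.exp_bound (n := 4) (abs_le.2 ⟨hy1.le, by linarith⟩) (by norm_num))).2
    norm_num [sum_range_succ, Nat.factorial, abs_of_nonpos hy] at h
    have hy3 : y ^ 3 * (1 + y) ≤ 0 :=
      mul_nonpos_of_nonpos_of_nonneg (by nlinarith [sq_nonneg y]) (by linarith)
    nlinarith [sq_nonneg y]

theorem Real.exp_le_one_add_add_sq_div_two_mul_exp {y : ℝ} (hy0 : 0 ≤ y) (hy1 : y ≤ 1) :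
    Real.exp y ≤ 1 + y + y ^ 2 / 2 * Real.exp y := by
  have h := (abs_le.1 (Real.exp_bound (n := 3) (abs_le.2 ⟨by linarith, hy1⟩) (by norm_num))).2
  norm_num [sum_range_succ, Nat.factorial, abs_of_nonneg hy0] at h
  nlinarith [Real.add_one_le_exp y, pow_nonneg hy0 3, mul_nonneg (sq_nonneg y) hy0]

theorem Real.exp_le_one_add_add_sq_div_two_mul_exp_of_le {y b : ℝ} (hyb : y ≤ b) (hb0 : 0 ≤ b)
    (hb1 : b ≤ 1) : Real.exp y ≤ 1 + y + y ^ 2 / 2 * Real.exp b := by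
  rcases le_or_gt y 0 with hy | hy
  · nlinarith [Real.exp_le_one_add_add_sq_div_two_of_nonpos hy, Real.one_le_exp hb0, sq_nonneg y]
  · calc Real.exp y ≤ 1 + y + y ^ 2 / 2 * Real.exp y :=
          Real.exp_le_one_add_add_sq_div_two_mul_exp hy.le (hyb.trans hb1)
      _ ≤ 1 + y + y ^ 2 / 2 * Real.exp b := by gcongr

theorem freedman_exponent_le {z u v : ℝ} (hz : 0 ≤ z) (hu : 0 ≤ u) (hv : 0 < v) :
    (z / (z * u + v)) ^ 2 * Real.exp (z / (z * u + v) * u) / 2 * v - z / (z * u + v) * z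
      ≤ -z ^ 2 / (2 * z * u + 2 * v) := by
  have hs : 0 < z * u + v := by positivity
  have hexp : Real.exp (z / (z * u + v) * u) ≤ (z * u + v) / v := by
    have h1 : 1 - z / (z * u + v) * u = v / (z * u + v) := by field_simp; ring
    have h2 : z / (z * u + v) * u < 1 := by
      rw [div_mul_eq_mul_div, div_lt_one hs]; linarith
    simpa [h1] using Real.exp_bound_div_one_sub_of_interval (by positivity) h2
  calc (z / (z * u + v)) ^ 2 * Real.exp (z / (z * u + v) * u) / 2 * v - z / (z * u + v) * z
      ≤ (z / (z * u + v)) ^ 2 * ((z * u + v) / v) / 2 * v - z / (z * u + v) * z := by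
        gcongr
    _ = -z ^ 2 / (2 * z * u + 2 * v) := by field_simp; ring

section

variable {Ω : Type*} {m0 : MeasurableSpace Ω} {μ : Measure Ω}

theorem memLp_top_exp_mul_min_sub {ξ w : Ω → ℝ} (hξ : AEStronglyMeasurable ξ μ)
    (hw : AEStronglyMeasurable w μ) (hw0 : 0 ≤ᵐ[μ] w) {L c : ℝ} (hL : 0 ≤ L) (hc : 0 ≤ c)
    (u : ℝ) : MemLp (fun ω => Real.exp (L * min (ξ ω) u - c * w ω)) ∞ μ := by
  refine memLp_top_of_bound (Real.continuous_exp.comp_aestronglyMeasurable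
    (((hξ.inf aestronglyMeasurable_const).const_mul L).sub (hw.const_mul c)))
    (Real.exp (L * u)) ?_
  filter_upwards [hw0] with ω hω
  rw [Real.norm_eq_abs, abs_of_pos (Real.exp_pos _), Real.exp_le_exp]
  nlinarith [mul_le_mul_of_nonneg_left (min_le_right (ξ ω) u) hL, mul_nonneg hc hω]

theorem integrable_exp_mul_min [IsFiniteMeasure μ] {ξ : Ω → ℝ} (hξ : AEStronglyMeasurable ξ μ)
    {L : ℝ} (hL : 0 ≤ L) (u : ℝ) : Integrable (fun ω => Real.exp (L * min (ξ ω) u)) μ := by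
  simpa using (memLp_top_exp_mul_min_sub hξ aestronglyMeasurable_const (w := 0)
    (Filter.EventuallyLE.refl _ _) hL le_rfl u).integrable le_top

theorem condExp_exp_mul_min_le [IsFiniteMeasure μ] {m : MeasurableSpace Ω} (hm : m ≤ m0)
    {ξ : Ω → ℝ} (hξ : MemLp ξ 2 μ) (hcond : μ[ξ | m] ≤ᵐ[μ] 0) {L u c : ℝ} (hL : 0 ≤ L)
    (hu : 0 ≤ u) (hLu : L * u ≤ 1) (hc : L ^ 2 * Real.exp (L * u) / 2 ≤ c) :
    μ[fun ω => Real.exp (L * min (ξ ω) u) | m] ≤ᵐ[μ]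
      fun ω => Real.exp (c * μ[fun ω => ξ ω ^ 2 | m] ω) := by
  set X : Ω → ℝ := fun ω => min (ξ ω) u
  have hXabs : ∀ ω, |X ω| ≤ |ξ ω| := fun ω => by
    rcases min_cases (ξ ω) u with ⟨h, -⟩ | ⟨h, h'⟩ <;> simp only [X, h]
    · exact le_rfl
    · rw [abs_of_nonneg hu, abs_of_pos (hu.trans_lt h')]; exact h'.le
  have hξint : Integrable ξ μ := hξ.integrable one_le_two
  have hXint : Integrable X μ := hξint.mono (hξ.1.inf aestronglyMeasurable_const) <|
    ae_of_all _ fun ω => by simpa only [Real.norm_eq_abs] using hXabs ω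
  have hsqint : Integrable (fun ω => ξ ω ^ 2) μ := hξ.integrable_sq
  have hc0 : 0 ≤ c := le_trans (by positivity) hc
  have hexp : ∀ ω, Real.exp (L * X ω) ≤ 1 + L * X ω + c * ξ ω ^ 2 := fun ω => calc
    Real.exp (L * X ω) ≤ 1 + L * X ω + L ^ 2 * Real.exp (L * u) / 2 * X ω ^ 2 := by
      have := Real.exp_le_one_add_add_sq_div_two_mul_exp_of_le
        (mul_le_mul_of_nonneg_left (min_le_right (ξ ω) u) hL) (mul_nonneg hL hu) hLu
      linarith
    _ ≤ 1 + L * X ω + c * ξ ω ^ 2 := by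
      gcongr 1 + L * X ω + ?_ * ?_
      exact sq_le_sq.2 (hXabs ω)
  have hexpint := integrable_exp_mul_min hξ.1 hL u
  have hquadint : Integrable (fun ω => 1 + L * X ω + c * ξ ω ^ 2) μ :=
    ((integrable_const 1).add (hXint.const_mul L)).add (hsqint.const_mul c)
  have hquad : μ[fun ω => 1 + L * X ω + c * ξ ω ^ 2 | m] =ᵐ[μ]
      fun ω => 1 + L * μ[X | m] ω + c * μ[fun ω => ξ ω ^ 2 | m] ω := by
    change μ[(fun _ => (1 : ℝ)) + L • X + c • (fun ω => ξ ω ^ 2) | m] =ᵐ[μ] _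
    filter_upwards [condExp_add ((integrable_const 1).add (hXint.smul L)) (hsqint.smul c) m,
      condExp_add (integrable_const 1) (hXint.smul L) m, condExp_smul L X m,
      condExp_smul c (fun ω => ξ ω ^ 2) m] with ω h1 h2 h3 h4
    simp [h1, h2, h3, h4, condExp_const hm]
  have hXcond : μ[X | m] ≤ᵐ[μ] 0 :=
    (condExp_mono hXint hξint (ae_of_all _ fun ω => min_le_left _ _)).trans hcond
  filter_upwards [condExp_mono hexpint hquadint (ae_of_all _ hexp), hquad, hXcond]
    with ω hmono hquadω hXω
  calc μ[fun ω => Real.exp (L * X ω) | m] ω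
      ≤ 1 + L * μ[X | m] ω + c * μ[fun ω => ξ ω ^ 2 | m] ω := hquadω ▸ hmono
    _ ≤ c * μ[fun ω => ξ ω ^ 2 | m] ω + 1 := by
      nlinarith [mul_nonpos_of_nonneg_of_nonpos hL hXω]
    _ ≤ Real.exp (c * μ[fun ω => ξ ω ^ 2 | m] ω) := Real.add_one_le_exp _

theorem condExp_exp_mul_min_sub_le_one [IsFiniteMeasure μ] {m : MeasurableSpace Ω} (hm : m ≤ m0)
    {ξ : Ω → ℝ} (hξ : MemLp ξ 2 μ) (hcond : μ[ξ | m] ≤ᵐ[μ] 0) {L u c : ℝ} (hL : 0 ≤ L)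
    (hu : 0 ≤ u) (hLu : L * u ≤ 1) (hc : L ^ 2 * Real.exp (L * u) / 2 ≤ c) :
    μ[fun ω => Real.exp (L * min (ξ ω) u - c * μ[fun ω => ξ ω ^ 2 | m] ω) | m] ≤ᵐ[μ] 1 := by
  set w := μ[fun ω => ξ ω ^ 2 | m]
  have hc0 : 0 ≤ c := le_trans (by positivity) hc
  have hw0 : 0 ≤ᵐ[μ] w := condExp_nonneg (ae_of_all _ fun ω => sq_nonneg (ξ ω))
  have hsplit : (fun ω => Real.exp (L * min (ξ ω) u - c * w ω))
      = (fun ω => Real.exp (-(c * w ω))) * fun ω => Real.exp (L * min (ξ ω) u) := by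
    ext ω; simp only [Pi.mul_apply, ← Real.exp_add]; ring_nf
  have hdiscount : StronglyMeasurable[m] fun ω => Real.exp (-(c * w ω)) :=
    Real.continuous_exp.comp_stronglyMeasurable (stronglyMeasurable_condExp.const_mul c).neg
  have hpull := condExp_stronglyMeasurable_mul_of_bound hm hdiscount
    (integrable_exp_mul_min hξ.1 hL u) 1 <| by
      filter_upwards [hw0] with ω hω
      rw [Real.norm_eq_abs, abs_of_pos (Real.exp_pos _), Real.exp_le_one_iff, neg_nonpos]
      exact mul_nonneg hc0 hω
  rw [hsplit]
  filter_upwards [hpull, condExp_exp_mul_min_le hm hξ hcond hL hu hLu hc] with ω hpullω hω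
  rw [hpullω, Pi.mul_apply, Pi.one_apply, ← le_div_iff₀' (Real.exp_pos _), one_div,
    ← Real.exp_neg, neg_neg]
  exact hω

theorem integral_prod_Icc_le_one [IsProbabilityMeasure μ] {ℱ : ℕ → MeasurableSpace Ω}
    (hmono : Monotone ℱ) (hle : ∀ i, ℱ i ≤ m0) {Y : ℕ → Ω → ℝ} (n : ℕ)
    (hmeas : ∀ i ∈ Icc 1 n, StronglyMeasurable[ℱ i] (Y i))
    (hbdd : ∀ i ∈ Icc 1 n, MemLp (Y i) ∞ μ) (hnonneg : ∀ i ∈ Icc 1 n, ∀ ω, 0 ≤ Y i ω)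
    (hcond : ∀ i ∈ Icc 1 n, μ[Y i | ℱ (i - 1)] ≤ᵐ[μ] 1) :
    ∫ ω, ∏ i ∈ Icc 1 n, Y i ω ∂μ ≤ 1 := by
  induction n with
  | zero => simp
  | succ n ih =>
    have hsub : Icc 1 n ⊆ Icc 1 (n + 1) := Icc_subset_Icc_right n.le_succ
    have hlast : n + 1 ∈ Icc 1 (n + 1) := right_mem_Icc.2 (by omega)
    set P : Ω → ℝ := fun ω => ∏ i ∈ Icc 1 n, Y i ω
    have hPmeas : StronglyMeasurable[ℱ n] P := by
      simpa only [Finset.prod_fn] using Finset.stronglyMeasurable_prod _ fun i hi =>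
        (hmeas i (hsub hi)).mono (hmono (mem_Icc.1 hi).2)
    have hPbdd : MemLp P ∞ μ := by
      simpa using MemLp.prod' (p := fun _ => ∞) fun i hi => hbdd i (hsub hi)
    have hPnonneg : ∀ ω, 0 ≤ P ω := fun ω => prod_nonneg fun i hi => hnonneg i (hsub hi) ω
    have hYint : Integrable (Y (n + 1)) μ := (hbdd _ hlast).integrable le_top
    have hpull : μ[P * Y (n + 1) | ℱ n] =ᵐ[μ] P * μ[Y (n + 1) | ℱ n] :=
      condExp_mul_of_stronglyMeasurable_left hPmeas (hYint.mul_of_top_right hPbdd) hYint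
    calc ∫ ω, ∏ i ∈ Icc 1 (n + 1), Y i ω ∂μ
        = ∫ ω, μ[P * Y (n + 1) | ℱ n] ω ∂μ := by
          simp_rw [prod_Icc_succ_top (by omega : 1 ≤ n + 1), integral_condExp (hle n)]; rfl
      _ ≤ ∫ ω, P ω ∂μ := by
          refine integral_mono_ae integrable_condExp (hPbdd.integrable le_top) ?_
          filter_upwards [hpull, hcond _ hlast] with ω hω hω'
          simpa [hω] using mul_le_of_le_one_right (hPnonneg ω) hω'
      _ ≤ 1 := ih (fun i hi => hmeas i (hsub hi)) (fun i hi => hbdd i (hsub hi))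
          (fun i hi => hnonneg i (hsub hi)) (fun i hi => hcond i (hsub hi))

noncomputable def sumCondExpSq (μ : Measure Ω) (ℱ : ℕ → MeasurableSpace Ω) (ξ : ℕ → Ω → ℝ)
    (n : ℕ) (ω : Ω) : ℝ :=
  ∑ i ∈ Icc 1 n, μ[fun ω => ξ i ω ^ 2 | ℱ (i - 1)] ω

theorem freedman_one_sided [IsProbabilityMeasure μ] {ℱ : ℕ → MeasurableSpace Ω}
    (hmono : Monotone ℱ) (hle : ∀ i, ℱ i ≤ m0) {ξ : ℕ → Ω → ℝ} {n : ℕ}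
    (hmeas : ∀ i ∈ Icc 1 n, StronglyMeasurable[ℱ i] (ξ i))
    (hL2 : ∀ i ∈ Icc 1 n, MemLp (ξ i) 2 μ)
    (hsuper : ∀ i ∈ Icc 1 n, μ[ξ i | ℱ (i - 1)] ≤ᵐ[μ] 0) {z u v : ℝ} (hz : 0 < z) (hu : 0 < u)
    (hv : 0 < v) :
    μ.real {ω | z ≤ ∑ i ∈ Icc 1 n, ξ i ω ∧ (∀ i ∈ Icc 1 n, ξ i ω ≤ u) ∧
        sumCondExpSq μ ℱ ξ n ω ≤ v} ≤ Real.exp (-z ^ 2 / (2 * z * u + 2 * v)) := by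
  set L := z / (z * u + v)
  set c := L ^ 2 * Real.exp (L * u) / 2
  set w : ℕ → Ω → ℝ := fun i => μ[fun ω => ξ i ω ^ 2 | ℱ (i - 1)]
  set Y : ℕ → Ω → ℝ := fun i ω => Real.exp (L * min (ξ i ω) u - c * w i ω)
  have hL : 0 ≤ L := by positivity
  have hc : 0 ≤ c := by positivity
  have hLu : L * u ≤ 1 := by
    rw [div_mul_eq_mul_div, div_le_one (by positivity)]; linarith
  have hYmeas : ∀ i ∈ Icc 1 n, StronglyMeasurable[ℱ i] (Y i) := fun i hi =>
    (((((hmeas i hi).measurable.min measurable_const).const_mul L).sub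
      ((stronglyMeasurable_condExp.mono (hmono (Nat.sub_le i 1))).measurable.const_mul c)).exp
      ).stronglyMeasurable
  have hYbdd : ∀ i ∈ Icc 1 n, MemLp (Y i) ∞ μ := fun i hi =>
    memLp_top_exp_mul_min_sub (hL2 i hi).1 integrable_condExp.1
      (condExp_nonneg (ae_of_all _ fun ω => sq_nonneg (ξ i ω))) hL hc u
  have hprod : ∫ ω, ∏ i ∈ Icc 1 n, Y i ω ∂μ ≤ 1 :=
    integral_prod_Icc_le_one hmono hle n hYmeas hYbdd (fun _ _ _ => (Real.exp_pos _).le)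
      fun i hi =>
        condExp_exp_mul_min_sub_le_one (hle _) (hL2 i hi) (hsuper i hi) hL hu.le hLu le_rfl
  have hevent : {ω | z ≤ ∑ i ∈ Icc 1 n, ξ i ω ∧ (∀ i ∈ Icc 1 n, ξ i ω ≤ u) ∧
      sumCondExpSq μ ℱ ξ n ω ≤ v} ⊆ {ω | Real.exp (L * z - c * v) ≤ ∏ i ∈ Icc 1 n, Y i ω} := by
    rintro ω ⟨hsum, hbound, hvar⟩
    simp only [Set.mem_ofPred_eq, Y, ← Real.exp_sum, Real.exp_le_exp, sum_sub_distrib, ← mul_sum]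
    rw [sum_congr rfl fun i hi => min_eq_left (hbound i hi)]
    gcongr
    exact hvar
  have hYprod : MemLp (fun ω => ∏ i ∈ Icc 1 n, Y i ω) ∞ μ := by
    simpa using MemLp.prod' (p := fun _ => ∞) hYbdd
  have hmarkov := mul_meas_ge_le_integral_of_nonneg
    (ae_of_all _ fun ω => prod_nonneg fun i _ => (Real.exp_pos (L * min (ξ i ω) u - c * w i ω)).le)
    (hYprod.integrable le_top) (Real.exp (L * z - c * v))
  calc _ ≤ μ.real {ω | Real.exp (L * z - c * v) ≤ ∏ i ∈ Icc 1 n, Y i ω} := measureReal_mono hevent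
    _ ≤ Real.exp (c * v - L * z) := by
      refine le_of_mul_le_mul_left ?_ (Real.exp_pos (L * z - c * v))
      rw [← Real.exp_add, show L * z - c * v + (c * v - L * z) = 0 by ring, Real.exp_zero]
      exact hmarkov.trans hprod
    _ ≤ Real.exp (-z ^ 2 / (2 * z * u + 2 * v)) :=
      Real.exp_le_exp.2 (freedman_exponent_le hz.le hu.le hv)

theorem sumCondExpSq_neg (μ : Measure Ω) (ℱ : ℕ → MeasurableSpace Ω) (ξ : ℕ → Ω → ℝ) (n : ℕ) :
    sumCondExpSq μ ℱ (fun i => -ξ i) n = sumCondExpSq μ ℱ ξ n := by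
  unfold sumCondExpSq; simp only [Pi.neg_apply, neg_sq]

theorem freedman_two_sided [IsProbabilityMeasure μ] {ℱ : ℕ → MeasurableSpace Ω}
    (hmono : Monotone ℱ) (hle : ∀ i, ℱ i ≤ m0) {ξ : ℕ → Ω → ℝ} {n : ℕ}
    (hmeas : ∀ i ∈ Icc 1 n, StronglyMeasurable[ℱ i] (ξ i))
    (hL2 : ∀ i ∈ Icc 1 n, MemLp (ξ i) 2 μ)
    (hmds : ∀ i ∈ Icc 1 n, μ[ξ i | ℱ (i - 1)] =ᵐ[μ] 0) {z u v : ℝ} (hz : 0 < z) (hu : 0 < u)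
    (hv : 0 < v) :
    μ.real {ω | z ≤ |∑ i ∈ Icc 1 n, ξ i ω| ∧ (∀ i ∈ Icc 1 n, |ξ i ω| ≤ u) ∧
        sumCondExpSq μ ℱ ξ n ω ≤ v} ≤ 2 * Real.exp (-z ^ 2 / (2 * z * u + 2 * v)) := by
  have hupper := freedman_one_sided hmono hle hmeas hL2 (fun i hi => (hmds i hi).le) hz hu hv
  have hlower := freedman_one_sided (ξ := fun i => -ξ i) hmono hle (fun i hi => (hmeas i hi).neg)
    (fun i hi => (hL2 i hi).neg)
    (fun i hi => (((condExp_neg (ξ i) _).trans (hmds i hi).neg).trans (by rw [neg_zero])).le)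
    hz hu hv
  rw [sumCondExpSq_neg] at hlower
  calc _ ≤ μ.real ({ω | z ≤ ∑ i ∈ Icc 1 n, ξ i ω ∧ (∀ i ∈ Icc 1 n, ξ i ω ≤ u) ∧
          sumCondExpSq μ ℱ ξ n ω ≤ v} ∪ {ω | z ≤ ∑ i ∈ Icc 1 n, (-ξ i) ω ∧
          (∀ i ∈ Icc 1 n, (-ξ i) ω ≤ u) ∧ sumCondExpSq μ ℱ ξ n ω ≤ v}) := by
        refine measureReal_mono fun ω ⟨hsum, hbound, hvar⟩ => ?_
        rcases le_abs.1 hsum with hpos | hneg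
        · exact .inl ⟨hpos, fun i hi => (le_abs_self _).trans (hbound i hi), hvar⟩
        · refine .inr ⟨by simpa using hneg, fun i hi => ?_, hvar⟩
          simpa using (neg_le_abs _).trans (hbound i hi)
    _ ≤ _ := (measureReal_union_le _ _).trans (add_le_add hupper hlower)
    _ = _ := by ring

theorem measureReal_sup'_abs_ge_le [IsFiniteMeasure μ] {ι : Type*} (A : Finset ι)
    (hA : A.Nonempty) (I : Finset ℕ) (Y W : ι → Ω → ℝ) (X : ι → ℕ → Ω → ℝ) (z u v : ℝ) :
    μ.real {ω | z ≤ A.sup' hA fun a => |Y a ω|} ≤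
      ∑ i ∈ I, μ.real {ω | u ≤ A.sup' hA fun a => |X a i ω|}
        + μ.real {ω | v ≤ A.sup' hA fun a => W a ω}
        + ∑ a ∈ A, μ.real {ω | z ≤ |Y a ω| ∧ (∀ i ∈ I, |X a i ω| ≤ u) ∧ W a ω ≤ v} := by
  have hcover : {ω | z ≤ A.sup' hA fun a => |Y a ω|} ⊆
      (⋃ i ∈ I, {ω | u ≤ A.sup' hA fun a => |X a i ω|}) ∪ {ω | v ≤ A.sup' hA fun a => W a ω} ∪
        ⋃ a ∈ A, {ω | z ≤ |Y a ω| ∧ (∀ i ∈ I, |X a i ω| ≤ u) ∧ W a ω ≤ v} := by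
    intro ω (hω : z ≤ A.sup' hA fun a => |Y a ω|)
    obtain ⟨a, ha, hza⟩ := (le_sup'_iff hA).1 hω
    by_cases hbig : ∃ i ∈ I, u ≤ A.sup' hA fun a => |X a i ω|
    · obtain ⟨i, hi, h⟩ := hbig
      exact .inl (.inl (Set.mem_biUnion hi h))
    by_cases hvar : v ≤ A.sup' hA fun a => W a ω
    · exact .inl (.inr hvar)
    push Not at hbig hvar
    exact .inr (Set.mem_biUnion ha ⟨hza,
      fun i hi => ((le_sup' (fun a => |X a i ω|) ha).trans_lt (hbig i hi)).le,
      ((le_sup' (fun a => W a ω) ha).trans_lt hvar).le⟩)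
  refine (measureReal_mono hcover).trans <| (measureReal_union_le _ _).trans ?_
  gcongr
  · refine (measureReal_union_le _ _).trans ?_
    gcongr
    exact measureReal_biUnion_finset_le _ _
  · exact measureReal_biUnion_finset_le _ _

end

/-- High-dimensional Freedman inequality for martingale difference sequences. -/
theorem freedman_highdim
    {Ω : Type*} {m0 : MeasurableSpace Ω} (μ : Measure Ω) [IsProbabilityMeasure μ]
    (n : ℕ) (ℱ : ℕ → MeasurableSpace Ω) (hmono : Monotone ℱ) (hle : ∀ i, ℱ i ≤ m0)
    {ι : Type*} (A : Finset ι) (hA : A.Nonempty)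
    (ξ : ι → ℕ → Ω → ℝ)
    (hmeas : ∀ a ∈ A, ∀ i ∈ Finset.Icc 1 n, StronglyMeasurable[ℱ i] (ξ a i))
    (hL2 : ∀ a ∈ A, ∀ i ∈ Finset.Icc 1 n, MemLp (ξ a i) 2 μ)
    (hmds : ∀ a ∈ A, ∀ i ∈ Finset.Icc 1 n, μ[ξ a i | ℱ (i - 1)] =ᵐ[μ] 0)
    (M V : ι → Ω → ℝ)
    (hM : ∀ a, M a = fun ω => ∑ i ∈ Finset.Icc 1 n, ξ a i ω)
    (hV : ∀ a, V a = fun ω => ∑ i ∈ Finset.Icc 1 n,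
      (μ[fun ω' => (ξ a i ω') ^ 2 | ℱ (i - 1)]) ω)
    (z u v : ℝ) (hz : 0 < z) (hu : 0 < u) (hv : 0 < v) :
    (μ {ω | z ≤ A.sup' hA fun a => |M a ω|}).toReal ≤
      (∑ i ∈ Finset.Icc 1 n, (μ {ω | u ≤ A.sup' hA fun a => |ξ a i ω|}).toReal)
        + 2 * (μ {ω | v ≤ A.sup' hA fun a => V a ω}).toReal
        + 2 * (A.card : ℝ) * Real.exp (-z ^ 2 / (2 * z * u + 2 * v)) := by
  obtain rfl : M = fun a ω => ∑ i ∈ Icc 1 n, ξ a i ω := funext hM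
  obtain rfl : V = fun a => sumCondExpSq μ ℱ (ξ a) n := funext hV
  have hcoord : ∀ a ∈ A, μ.real {ω | z ≤ |∑ i ∈ Icc 1 n, ξ a i ω| ∧
      (∀ i ∈ Icc 1 n, |ξ a i ω| ≤ u) ∧ sumCondExpSq μ ℱ (ξ a) n ω ≤ v} ≤
        2 * Real.exp (-z ^ 2 / (2 * z * u + 2 * v)) := fun a ha =>
    freedman_two_sided hmono hle (hmeas a ha) (hL2 a ha) (hmds a ha) hz hu hv
  refine (measureReal_sup'_abs_ge_le A hA (Icc 1 n) _ (fun a => sumCondExpSq μ ℱ (ξ a) n) ξ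
    z u v).trans ?_
  grw [sum_le_sum hcoord, sum_const, nsmul_eq_mul]
  have hW : 0 ≤ μ.real {ω | v ≤ A.sup' hA fun a => sumCondExpSq μ ℱ (ξ a) n ω} :=
    measureReal_nonneg
  simp only [measureReal_def] at hW ⊢
  linarith
end

section
/- Burkholder's inequality with explicit constant: Let q > 1 and q′ = min(q, 2), and set K_q = max( (q−1)^{-1}, √(q−1) ). If (ξ_t)_{t=1}^T is a martingale difference sequence with respect to a filtration (F_t) and each ξ_t ∈ L^q, then the sum M_T = Σ_{t=1}^T ξ_t satisfies ‖M_T‖_q^{q′} ≤ K_q^{q′} · Σ_{t=1}^T ‖ξ_t‖_q^{q′}. -/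
/-!
Write `M_n = ξ_1 + ⋯ + ξ_n`, so that `M_{n+1} = X + Y` with `X = M_n` measurable for `F_n` and
`E[Y | F_n] = 0`. Then `E[sign X |X|^{q-1} Y] = 0`, and everything reduces to a one-step
inequality for such pairs, which is summed along the martingale.

For `1 < q ≤ 2` the pointwise bound `|x + y|^q ≤ |x|^q + q sign x |x|^{q-1} y + 2^{2-q} |y|^q`
(a consequence of the `(q-1)`-Hölder continuity of `x ↦ sign x |x|^{q-1}`) gives
`E|X + Y|^q ≤ E|X|^q + 2^{2-q} E|Y|^q`, and `2^{2-q} ≤ (q-1)^{-q}`.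

For `q ≥ 2` put `g(t) = E|X + tY|^q`. Then `g'(0) = 0`, and Hölder's inequality gives
`g'' ≤ q(q-1) g^{(q-2)/q} ‖Y‖_q^2`, hence `(g^{2/q})'' ≤ 2(q-1)‖Y‖_q^2`. Taylor's formula for
`g^{2/q}` between `0` and `1` yields `‖X + Y‖_q^2 ≤ ‖X‖_q^2 + (q-1)‖Y‖_q^2`.
-/

open MeasureTheory ProbabilityTheory Real Set Filter

lemma le_of_deriv_nonneg_left_nonpos_right {f f' : ℝ → ℝ} {x₀ : ℝ}
    (hf : ∀ t, HasDerivAt f (f' t) t) (hleft : ∀ t ≤ x₀, 0 ≤ f' t)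
    (hright : ∀ t, x₀ ≤ t → f' t ≤ 0) (y : ℝ) : f y ≤ f x₀ := by
  have hcont : Continuous f := continuous_iff_continuousAt.2 fun t => (hf t).continuousAt
  rcases lt_trichotomy y x₀ with hy | rfl | hy
  · obtain ⟨c, hc, hslope⟩ := exists_hasDerivAt_eq_slope f f' hy hcont.continuousOn
      fun t _ => hf t
    have := hleft c hc.2.le
    rw [hslope, div_nonneg_iff] at this
    rcases this with ⟨h, _⟩ | ⟨_, h⟩ <;> linarith
  · exact le_rfl
  · obtain ⟨c, hc, hslope⟩ := exists_hasDerivAt_eq_slope f f' hy hcont.continuousOn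
      fun t _ => hf t
    have := hright c hc.1.le
    rw [hslope, div_nonpos_iff] at this
    rcases this with ⟨h, _⟩ | ⟨_, h⟩ <;> linarith

lemma add_deriv_mul_sub_le_of_monotone_deriv {f f' : ℝ → ℝ}
    (hf : ∀ t, HasDerivAt f (f' t) t) (hf' : Monotone f') (x y : ℝ) :
    f x + f' x * (y - x) ≤ f y := by
  have key := le_of_deriv_nonneg_left_nonpos_right (f := fun t => f x + f' x * (t - x) - f t)
    (f' := fun t => f' x - f' t) (x₀ := x)
    (fun t => (((hasDerivAt_id t).sub_const x).const_mul (f' x)).const_add (f x) |>.sub (hf t)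
      |>.congr_deriv (by ring))
    (fun t ht => sub_nonneg.2 (hf' ht)) (fun t ht => sub_nonpos.2 (hf' ht)) y
  simp only [sub_self, mul_zero, add_zero] at key
  linarith

lemma le_add_deriv_mul_sub_add_sq_of_deriv2_le {f f' f'' : ℝ → ℝ} {C : ℝ}
    (hf : ∀ t, HasDerivAt f (f' t) t) (hf' : ∀ t, HasDerivAt f' (f'' t) t)
    (hC : ∀ t, f'' t ≤ C) (x y : ℝ) :
    f y ≤ f x + f' x * (y - x) + C / 2 * (y - x) ^ 2 := by
  have hsq : ∀ t, HasDerivAt (fun t => C / 2 * (t - x) ^ 2) (C * (t - x)) t := fun t =>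
    (((hasDerivAt_id t).sub_const x).pow 2).const_mul (C / 2) |>.congr_deriv
      (by simp only [Nat.add_one_sub_one, pow_one, mul_one, id]; ring)
  have hmono : Monotone fun t => C * (t - x) - f' t :=
    monotone_of_hasDerivAt_nonneg (f' := fun t => C - f'' t)
      (fun t => (((hasDerivAt_id t).sub_const x).const_mul C).sub (hf' t) |>.congr_deriv
        (by rw [mul_one])) fun t => sub_nonneg.2 (hC t)
  have key := add_deriv_mul_sub_le_of_monotone_deriv (fun t => (hsq t).sub (hf t)) hmono x y
  simp only [Pi.sub_apply, sub_self, mul_zero, zero_sub] at key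
  linarith

lemma rpow_two_div_le_of_hasDerivAt {g g' g'' : ℝ → ℝ} {q B : ℝ} (hq : 2 ≤ q)
    (hg : ∀ t, HasDerivAt g (g' t) t) (hg' : ∀ t, HasDerivAt g' (g'' t) t)
    (hg0 : 0 < g 0) (hg'0 : g' 0 = 0) (hg''_nonneg : ∀ t, 0 ≤ g'' t)
    (hg''_le : ∀ t, g'' t ≤ q * (q - 1) * g t ^ ((q - 2) / q) * B) :
    g 1 ^ (2 / q) ≤ g 0 ^ (2 / q) + (q - 1) * B := by
  -- `g` is convex with `g' 0 = 0`, hence minimal at `0`; so `g ^ (2 / q)` is twice differentiable.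
  have hpos : ∀ t, 0 < g t := fun t => by
    have := add_deriv_mul_sub_le_of_monotone_deriv hg
      (monotone_of_hasDerivAt_nonneg hg' hg''_nonneg) 0 t
    rw [hg'0, zero_mul, add_zero] at this
    exact hg0.trans_le this
  set p := 2 / q with hp
  have hq0 : 0 < q := by linarith
  have hp0 : 0 < p := by positivity
  have hp1 : p ≤ 1 := by rw [hp, div_le_one hq0]; linarith
  have hh : ∀ t, HasDerivAt (fun t => g t ^ p) (g' t * p * g t ^ (p - 1)) t := fun t =>
    (hg t).rpow_const (Or.inl (hpos t).ne')
  have hh' : ∀ t, HasDerivAt (fun t => g' t * p * g t ^ (p - 1))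
      (g'' t * p * g t ^ (p - 1) + g' t * p * (g' t * (p - 1) * g t ^ (p - 1 - 1))) t :=
    fun t => ((hg' t).mul_const p).mul ((hg t).rpow_const (Or.inl (hpos t).ne'))
  have hh'_le : ∀ t, g'' t * p * g t ^ (p - 1) + g' t * p * (g' t * (p - 1) * g t ^ (p - 1 - 1))
      ≤ 2 * (q - 1) * B := fun t => by
    have hgt := hpos t
    have hfirst : g'' t * p * g t ^ (p - 1) ≤ 2 * (q - 1) * B :=
      calc g'' t * p * g t ^ (p - 1)
          ≤ q * (q - 1) * g t ^ ((q - 2) / q) * B * p * g t ^ (p - 1) := by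
            gcongr
            exact hg''_le t
        _ = 2 * (q - 1) * B * (g t ^ ((q - 2) / q) * g t ^ (p - 1)) := by
            rw [hp]
            field_simp
        _ = 2 * (q - 1) * B := by
            rw [← rpow_add hgt, show (q - 2) / q + (p - 1) = 0 by rw [hp]; field_simp; ring,
              rpow_zero, mul_one]
    -- the `g' ^ 2` term of `(g ^ p)''` has the sign of `p - 1 ≤ 0`
    have hsecond : 0 ≤ g' t ^ 2 * p * (1 - p) * g t ^ (p - 1 - 1) :=
      mul_nonneg (mul_nonneg (by positivity) (sub_nonneg.2 hp1)) (by positivity)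
    linarith
  have := le_add_deriv_mul_sub_add_sq_of_deriv2_le hh hh' hh'_le 0 1
  simp only [hg'0, zero_mul, add_zero, sub_zero, one_pow, mul_one] at this
  linarith

lemma rpow_sub_rpow_le_rpow_sub {a s t : ℝ} (ha0 : 0 ≤ a) (ha1 : a ≤ 1) (ht : 0 ≤ t)
    (hts : t ≤ s) : s ^ a - t ^ a ≤ (s - t) ^ a := by
  have := rpow_add_le_add_rpow (sub_nonneg.2 hts) ht ha0 ha1
  rw [sub_add_cancel] at this
  linarith

lemma add_rpow_le_two_rpow_mul_rpow_add {a s t : ℝ} (ha0 : 0 ≤ a) (ha1 : a ≤ 1) (hs : 0 ≤ s)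
    (ht : 0 ≤ t) : s ^ a + t ^ a ≤ 2 ^ (1 - a) * (s + t) ^ a := by
  have hconc := (concaveOn_rpow ha0 ha1).2 (mem_Ici.2 hs) (mem_Ici.2 ht)
    (by norm_num : (0 : ℝ) ≤ 1 / 2) (by norm_num : (0 : ℝ) ≤ 1 / 2) (by norm_num)
  simp only [smul_eq_mul, ← mul_add] at hconc
  rw [mul_rpow (by norm_num) (by positivity), div_rpow zero_le_one zero_le_two, one_rpow] at hconc
  rw [rpow_sub zero_lt_two, rpow_one]
  have h2a : (0 : ℝ) < 2 ^ a := by positivity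
  field_simp at hconc ⊢
  linarith

noncomputable def signedRpow (p x : ℝ) : ℝ := |x| ^ (p - 1) * x

lemma signedRpow_of_nonneg {p x : ℝ} (hp : 0 < p) (hx : 0 ≤ x) : signedRpow p x = x ^ p := by
  rcases hx.eq_or_lt with rfl | hx
  · simp [signedRpow, zero_rpow hp.ne']
  · rw [signedRpow, abs_of_pos hx, ← rpow_add_one hx.ne', sub_add_cancel]

lemma signedRpow_neg (p x : ℝ) : signedRpow p (-x) = -signedRpow p x := by
  rw [signedRpow, signedRpow, abs_neg, mul_neg]

lemma abs_signedRpow {p : ℝ} (hp : 0 < p) (x : ℝ) : |signedRpow p x| = |x| ^ p := by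
  have h := signedRpow_of_nonneg hp (abs_nonneg x)
  rw [signedRpow, abs_abs] at h
  rw [signedRpow, abs_mul, abs_of_nonneg (by positivity), h]

lemma hasDerivAt_abs_rpow_signedRpow {q : ℝ} (hq : 1 < q) (x : ℝ) :
    HasDerivAt (fun x => |x| ^ q) (q * signedRpow (q - 1) x) x :=
  (hasDerivAt_abs_rpow x hq).congr_deriv (by rw [signedRpow]; ring_nf)

lemma hasDerivAt_signedRpow {p : ℝ} (hp : 1 ≤ p) (x : ℝ) :
    HasDerivAt (signedRpow p) (p * |x| ^ (p - 1)) x := by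
  rcases hp.eq_or_lt with rfl | hp
  · have : signedRpow 1 = id := funext fun y => by simp [signedRpow]
    simpa [this] using hasDerivAt_id x
  have hpos : ∀ x, 0 < x → HasDerivAt (signedRpow p) (p * |x| ^ (p - 1)) x := fun x hx => by
    rw [abs_of_pos hx]
    exact (hasDerivAt_rpow_const (Or.inl hx.ne')).congr_of_eventuallyEq
      ((eventually_gt_nhds hx).mono fun y hy => signedRpow_of_nonneg (by linarith) hy.le)
  rcases lt_trichotomy x 0 with hx | rfl | hx
  · have hodd : signedRpow p = fun y => -signedRpow p (-y) := funext fun y => by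
      rw [signedRpow_neg, neg_neg]
    rw [hodd]
    exact ((hpos (-x) (neg_pos.2 hx)).comp x (hasDerivAt_neg x)).neg.congr_deriv
      (by rw [abs_neg]; ring)
  · have h0 : HasDerivAt (fun y : ℝ => |y| ^ p) 0 0 := by
      simpa using hasDerivAt_abs_rpow 0 hp
    rw [hasDerivAt_iff_isLittleO] at h0 ⊢
    refine (Asymptotics.IsBigO.of_bound 1 (Eventually.of_forall fun y => ?_)).trans_isLittleO h0
    have hp1 : p - 1 ≠ 0 := by linarith
    simp [signedRpow, zero_rpow hp1, zero_rpow (by linarith : p ≠ 0),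
      ← abs_signedRpow (by linarith : 0 < p) y]
  · exact hpos x hx

lemma continuous_signedRpow {p : ℝ} (hp : 0 < p) : Continuous (signedRpow p) := by
  -- up to the factor `p + 1`, `signedRpow p` is the derivative of the `C¹` function `|x| ^ (p + 1)`
  have hderiv : deriv (fun x : ℝ => ‖x‖ ^ (p + 1)) = fun x => (p + 1) * signedRpow p x :=
    funext fun x => by
      simpa using (hasDerivAt_abs_rpow_signedRpow (by linarith : 1 < p + 1) x).deriv
  have h := (contDiff_norm_rpow (E := ℝ) (by linarith : 1 < p + 1)).continuous_deriv le_rfl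
  rw [hderiv] at h
  simpa [(by linarith : p + 1 ≠ 0)] using h.const_mul (p + 1)⁻¹

lemma abs_signedRpow_sub_le {p : ℝ} (hp0 : 0 < p) (hp1 : p ≤ 1) (s t : ℝ) :
    |signedRpow p s - signedRpow p t| ≤ 2 ^ (1 - p) * |s - t| ^ p := by
  wlog hts : t ≤ s generalizing s t
  · rw [abs_sub_comm, abs_sub_comm s]
    exact this t s (le_of_not_ge hts)
  have hone : (1 : ℝ) ≤ 2 ^ (1 - p) := one_le_rpow one_le_two (by linarith)
  have hsame : ∀ s t : ℝ, 0 ≤ t → t ≤ s →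
      |signedRpow p s - signedRpow p t| ≤ 2 ^ (1 - p) * |s - t| ^ p := by
    intro s t ht hts
    rw [signedRpow_of_nonneg hp0 ht, signedRpow_of_nonneg hp0 (ht.trans hts),
      abs_of_nonneg (sub_nonneg.2 hts), abs_of_nonneg (sub_nonneg.2 (rpow_le_rpow ht hts hp0.le))]
    exact (rpow_sub_rpow_le_rpow_sub hp0.le hp1 ht hts).trans
      (le_mul_of_one_le_left (by positivity) hone)
  rcases le_or_gt 0 t with ht | ht
  · exact hsame s t ht hts
  rcases le_or_gt s 0 with hs | hs
  · have := hsame (-t) (-s) (neg_nonneg.2 hs) (neg_le_neg hts)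
    rwa [signedRpow_neg, signedRpow_neg, neg_sub_neg, abs_sub_comm, neg_sub_neg,
      abs_sub_comm] at this
  · rw [← neg_neg t, signedRpow_neg, sub_neg_eq_add, sub_neg_eq_add,
      signedRpow_of_nonneg hp0 hs.le, signedRpow_of_nonneg hp0 (by linarith : 0 ≤ -t),
      abs_of_nonneg (add_nonneg (by positivity) (rpow_nonneg (by linarith) _)),
      abs_of_nonneg (by linarith : 0 ≤ s + -t)]
    exact add_rpow_le_two_rpow_mul_rpow_add hp0.le hp1 hs.le (by linarith)

lemma abs_add_rpow_le {q : ℝ} (hq1 : 1 < q) (hq2 : q ≤ 2) (x y : ℝ) :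
    |x + y| ^ q ≤ |x| ^ q + q * signedRpow (q - 1) x * y + 2 ^ (2 - q) * |y| ^ q := by
  have hq0 : 0 < q := by linarith
  have hp : 0 < q - 1 := by linarith
  set c := q * signedRpow (q - 1) x
  have hG : ∀ s, HasDerivAt (fun s => |x + s| ^ q - c * s - 2 ^ (2 - q) * |s| ^ q)
      (q * (signedRpow (q - 1) (x + s) - signedRpow (q - 1) x) -
        q * (2 ^ (2 - q) * signedRpow (q - 1) s)) s := fun s =>
    ((((hasDerivAt_abs_rpow_signedRpow hq1 (x + s)).comp s ((hasDerivAt_id s).const_add x)).sub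
      ((hasDerivAt_id s).const_mul c)).sub
      ((hasDerivAt_abs_rpow_signedRpow hq1 s).const_mul (2 ^ (2 - q)))).congr_deriv
      (by simp only [mul_one, c]; ring)
  have hbound : ∀ s, |signedRpow (q - 1) (x + s) - signedRpow (q - 1) x| ≤
      2 ^ (2 - q) * |s| ^ (q - 1) := fun s => by
    simpa [show 1 - (q - 1) = 2 - q by ring] using
      abs_signedRpow_sub_le hp (by linarith) (x + s) x
  -- by the Hölder bound, the function in `hG` increases on `s ≤ 0` and decreases on `s ≥ 0`
  have key := le_of_deriv_nonneg_left_nonpos_right hG (x₀ := 0) (fun s hs => ?_) (fun s hs => ?_) y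
  · simp only [add_zero, mul_zero, sub_zero, abs_zero, zero_rpow hq0.ne'] at key
    linarith
  · have hs' : signedRpow (q - 1) s = -|s| ^ (q - 1) := by
      rw [← neg_neg s, signedRpow_neg, signedRpow_of_nonneg hp (by linarith), abs_neg,
        abs_of_nonneg (by linarith : 0 ≤ -s)]
    have := mul_nonneg hq0.le (neg_le_iff_add_nonneg.1 (abs_le.1 (hbound s)).1)
    rw [hs']
    linarith
  · have hs' : signedRpow (q - 1) s = |s| ^ (q - 1) := by
      rw [signedRpow_of_nonneg hp hs, abs_of_nonneg hs]
    have := mul_le_mul_of_nonneg_left (abs_le.1 (hbound s)).2 hq0.le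
    rw [hs']
    linarith

section Integrals

variable {Ω : Type*} {m0 : MeasurableSpace Ω} {μ : Measure Ω}

lemma integrable_abs_rpow {q : ℝ} (hq : 0 < q) {f : Ω → ℝ} (hf : MemLp f (ENNReal.ofReal q) μ) :
    Integrable (fun ω => |f ω| ^ q) μ := by
  simpa [ENNReal.toReal_ofReal hq.le] using
    hf.integrable_norm_rpow (by simpa using hq) ENNReal.ofReal_ne_top

lemma integrable_abs_rpow_mul_abs_rpow {q a b : ℝ} (hq : 0 < q) (ha : 0 ≤ a) (hb : 0 ≤ b)
    (hab : a + b = q) {f g : Ω → ℝ} (hf : MemLp f (ENNReal.ofReal q) μ)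
    (hg : MemLp g (ENNReal.ofReal q) μ) :
    Integrable (fun ω => |f ω| ^ a * |g ω| ^ b) μ := by
  have hmeas : AEStronglyMeasurable (fun ω => |f ω| ^ a * |g ω| ^ b) μ :=
    ((hf.aestronglyMeasurable.norm.aemeasurable.pow_const a).mul
      (hg.aestronglyMeasurable.norm.aemeasurable.pow_const b)).aestronglyMeasurable
  refine (((integrable_abs_rpow hq hf).const_mul (a / q)).add
    ((integrable_abs_rpow hq hg).const_mul (b / q))).mono' hmeas (Eventually.of_forall fun ω => ?_)
  have hpow : ∀ x : ℝ, ∀ c, (|x| ^ q) ^ (c / q) = |x| ^ c := fun x c => by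
    rw [← rpow_mul (abs_nonneg x), mul_div_cancel₀ c hq.ne']
  have := geom_mean_le_arith_mean2_weighted (div_nonneg ha hq.le) (div_nonneg hb hq.le)
    (by positivity : 0 ≤ |f ω| ^ q) (by positivity : 0 ≤ |g ω| ^ q)
    (by rw [← add_div, hab, div_self hq.ne'])
  rw [hpow, hpow] at this
  rwa [norm_of_nonneg (by positivity)]

lemma integrable_signedRpow_mul {q : ℝ} (hq : 1 < q) {X Y : Ω → ℝ}
    (hX : MemLp X (ENNReal.ofReal q) μ) (hY : MemLp Y (ENNReal.ofReal q) μ) :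
    Integrable (fun ω => signedRpow (q - 1) (X ω) * Y ω) μ := by
  refine (integrable_abs_rpow_mul_abs_rpow (a := q - 1) (b := 1) (by linarith) (by linarith)
    zero_le_one (by ring) hX hY).mono'
    (((continuous_signedRpow (by linarith)).comp_aestronglyMeasurable
      hX.aestronglyMeasurable).mul hY.aestronglyMeasurable) (Eventually.of_forall fun ω => ?_)
  rw [norm_mul, norm_eq_abs, norm_eq_abs, abs_signedRpow (by linarith), rpow_one]

lemma integral_rpow_mul_rpow_le {f g : Ω → ℝ} (hf0 : ∀ ω, 0 ≤ f ω) (hg0 : ∀ ω, 0 ≤ g ω)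
    (hf : Integrable f μ) (hg : Integrable g μ) {a b : ℝ} (ha : 0 ≤ a) (hb : 0 ≤ b)
    (hab : a + b = 1) :
    ∫ ω, f ω ^ a * g ω ^ b ∂μ ≤ (∫ ω, f ω ∂μ) ^ a * (∫ ω, g ω ∂μ) ^ b := by
  have hofReal : ∀ ω, ENNReal.ofReal (f ω ^ a * g ω ^ b) =
      ENNReal.ofReal (f ω) ^ a * ENNReal.ofReal (g ω) ^ b := fun ω => by
    rw [ENNReal.ofReal_mul (by have := hf0 ω; positivity),
      ENNReal.ofReal_rpow_of_nonneg (hf0 ω) ha, ENNReal.ofReal_rpow_of_nonneg (hg0 ω) hb]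
  have hmeas : AEStronglyMeasurable (fun ω => f ω ^ a * g ω ^ b) μ :=
    ((hf.aemeasurable.pow_const a).mul (hg.aemeasurable.pow_const b)).aestronglyMeasurable
  rw [integral_eq_lintegral_of_nonneg_ae
      (ae_of_all _ fun ω => by have := hf0 ω; have := hg0 ω; positivity) hmeas,
    integral_eq_lintegral_of_nonneg_ae (ae_of_all _ hf0) hf.aestronglyMeasurable,
    integral_eq_lintegral_of_nonneg_ae (ae_of_all _ hg0) hg.aestronglyMeasurable,
    ENNReal.toReal_rpow, ENNReal.toReal_rpow, ← ENNReal.toReal_mul]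
  simp_rw [hofReal]
  exact ENNReal.toReal_mono (ENNReal.mul_ne_top (ENNReal.rpow_ne_top_of_nonneg ha
      hf.lintegral_lt_top.ne) (ENNReal.rpow_ne_top_of_nonneg hb hg.lintegral_lt_top.ne))
    (ENNReal.lintegral_mul_norm_pow_le hf.aemeasurable.ennreal_ofReal
      hg.aemeasurable.ennreal_ofReal ha hb hab)

lemma integral_abs_rpow_sub_two_mul_sq_le {q : ℝ} (hq : 2 ≤ q) {Z Y : Ω → ℝ}
    (hZ : MemLp Z (ENNReal.ofReal q) μ) (hY : MemLp Y (ENNReal.ofReal q) μ) :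
    ∫ ω, |Z ω| ^ (q - 2) * Y ω ^ 2 ∂μ ≤
      (∫ ω, |Z ω| ^ q ∂μ) ^ ((q - 2) / q) * (∫ ω, |Y ω| ^ q ∂μ) ^ (2 / q) := by
  have hq0 : 0 < q := by linarith
  have hpow : ∀ x c : ℝ, (|x| ^ q) ^ (c / q) = |x| ^ c := fun x c => by
    rw [← rpow_mul (abs_nonneg x), mul_div_cancel₀ c hq0.ne']
  have := integral_rpow_mul_rpow_le (μ := μ) (a := (q - 2) / q) (b := 2 / q)
    (fun ω => by positivity) (fun ω => by positivity)
    (integrable_abs_rpow hq0 hZ) (integrable_abs_rpow hq0 hY)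
    (div_nonneg (by linarith) hq0.le) (div_nonneg zero_le_two hq0.le) (by field_simp; ring)
  simp only [hpow] at this
  simpa [sq_abs] using this

lemma integral_mul_eq_zero_of_condExp_eq_zero {m : MeasurableSpace Ω} (hm : m ≤ m0)
    [SigmaFinite (μ.trim hm)] {f Y : Ω → ℝ} (hf : StronglyMeasurable[m] f)
    (hfY : Integrable (f * Y) μ) (hY : Integrable Y μ) (hY0 : μ[Y|m] =ᵐ[μ] 0) :
    ∫ ω, f ω * Y ω ∂μ = 0 := by
  have hprod : μ[f * Y|m] =ᵐ[μ] 0 := by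
    filter_upwards [condExp_mul_of_stronglyMeasurable_left hf hfY hY, hY0] with ω h h0
    simp [h, h0]
  simpa using (integral_condExp hm (f := f * Y)).symm.trans (integral_congr_ae hprod)

lemma hasDerivAt_integral_comp_add_mul {φ φ' : ℝ → ℝ} (hφ : ∀ z, HasDerivAt φ (φ' z) z)
    (hφ' : Continuous φ') {C r : ℝ} (hr : 0 ≤ r) (hφ'_le : ∀ z, |φ' z| ≤ C * |z| ^ r)
    {X Y V : Ω → ℝ} (hX : AEStronglyMeasurable X μ) (hY : AEStronglyMeasurable Y μ)
    (hV : AEStronglyMeasurable V μ) {t₀ : ℝ}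
    (hint : Integrable (fun ω => φ (X ω + t₀ * Y ω) * V ω) μ)
    (hdom : Integrable (fun ω => (|X ω| + (|t₀| + 1) * |Y ω|) ^ r * |Y ω * V ω|) μ) :
    HasDerivAt (fun t => ∫ ω, φ (X ω + t * Y ω) * V ω ∂μ)
      (∫ ω, φ' (X ω + t₀ * Y ω) * Y ω * V ω ∂μ) t₀ := by
  have hC : 0 ≤ C := by simpa using (abs_nonneg _).trans (hφ'_le 1)
  have hφc : Continuous φ := continuous_iff_continuousAt.2 fun z => (hφ z).continuousAt
  have hZ : ∀ t, AEStronglyMeasurable (fun ω => X ω + t * Y ω) μ := fun t =>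
    hX.add (hY.const_mul t)
  refine (hasDerivAt_integral_of_dominated_loc_of_deriv_le
    (F' := fun t ω => φ' (X ω + t * Y ω) * Y ω * V ω)
    (bound := fun ω => C * ((|X ω| + (|t₀| + 1) * |Y ω|) ^ r * |Y ω * V ω|))
    (Metric.ball_mem_nhds t₀ one_pos)
    (Eventually.of_forall fun t => (hφc.comp_aestronglyMeasurable (hZ t)).mul hV) hint
    (((hφ'.comp_aestronglyMeasurable (hZ t₀)).mul hY).mul hV)
    (Eventually.of_forall fun ω t ht => ?_) (hdom.const_mul C)
    (Eventually.of_forall fun ω t _ => ?_)).2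
  · have htle : |t| ≤ |t₀| + 1 := by
      rw [Metric.mem_ball, dist_eq] at ht
      linarith [abs_sub_abs_le_abs_sub t t₀]
    have hZle : |X ω + t * Y ω| ≤ |X ω| + (|t₀| + 1) * |Y ω| :=
      (abs_add_le _ _).trans (by rw [abs_mul]; gcongr)
    rw [norm_eq_abs, mul_assoc, abs_mul, ← mul_assoc C]
    gcongr
    exact (hφ'_le _).trans (by gcongr)
  · exact (((hφ (X ω + t * Y ω)).comp t
      ((hasDerivAt_mul_const (Y ω)).const_add (X ω))).mul_const (V ω))

lemma hasDerivAt_integral_abs_add_mul_rpow {q : ℝ} (hq : 1 < q) {X Y : Ω → ℝ}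
    (hX : MemLp X (ENNReal.ofReal q) μ) (hY : MemLp Y (ENNReal.ofReal q) μ) (t₀ : ℝ) :
    HasDerivAt (fun t => ∫ ω, |X ω + t * Y ω| ^ q ∂μ)
      (∫ ω, q * signedRpow (q - 1) (X ω + t₀ * Y ω) * Y ω ∂μ) t₀ := by
  have hq0 : 0 < q := by linarith
  have hW := hX.abs.add (hY.abs.const_mul (|t₀| + 1))
  have := hasDerivAt_integral_comp_add_mul (V := fun _ => 1) (C := q) (r := q - 1)
    (hasDerivAt_abs_rpow_signedRpow hq) ((continuous_signedRpow (by linarith)).const_mul q)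
    (by linarith) (fun z => by rw [abs_mul, abs_signedRpow (by linarith), abs_of_pos hq0])
    hX.aestronglyMeasurable hY.aestronglyMeasurable aestronglyMeasurable_const
    (by simpa using integrable_abs_rpow hq0 (hX.add (hY.const_mul t₀)))
    ((integrable_abs_rpow_mul_abs_rpow (a := q - 1) (b := 1) hq0 (by linarith) zero_le_one
      (by ring) hW hY).congr (ae_of_all _ fun ω => by
        simp [abs_of_nonneg (by positivity : 0 ≤ |X ω| + (|t₀| + 1) * |Y ω|)]))
  simpa using this

lemma hasDerivAt_integral_signedRpow_add_mul_mul {q : ℝ} (hq : 2 ≤ q) {X Y : Ω → ℝ}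
    (hX : MemLp X (ENNReal.ofReal q) μ) (hY : MemLp Y (ENNReal.ofReal q) μ) (t₀ : ℝ) :
    HasDerivAt (fun t => ∫ ω, q * signedRpow (q - 1) (X ω + t * Y ω) * Y ω ∂μ)
      (∫ ω, q * ((q - 1) * |X ω + t₀ * Y ω| ^ (q - 2)) * Y ω * Y ω ∂μ) t₀ := by
  have hq0 : 0 < q := by linarith
  have hW := hX.abs.add (hY.abs.const_mul (|t₀| + 1))
  refine hasDerivAt_integral_comp_add_mul (φ' := fun z => q * ((q - 1) * |z| ^ (q - 2)))
    (C := q * (q - 1)) (r := q - 2)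
    (fun z => ((hasDerivAt_signedRpow (by linarith) z).const_mul q).congr_deriv
      (by rw [show q - 1 - 1 = q - 2 by ring]))
    (continuous_const.mul (continuous_const.mul
      (continuous_abs.rpow_const fun _ => Or.inr (by linarith))))
    (by linarith) (fun z => by
      rw [abs_mul, abs_mul, abs_of_pos hq0, abs_of_pos (by linarith : 0 < q - 1),
        abs_of_nonneg (by positivity), mul_assoc])
    hX.aestronglyMeasurable hY.aestronglyMeasurable hY.aestronglyMeasurable
    (((integrable_signedRpow_mul (by linarith) (hX.add (hY.const_mul t₀)) hY).const_mul q).congr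
      (ae_of_all _ fun ω => by simp [mul_assoc]))
    ((integrable_abs_rpow_mul_abs_rpow (a := q - 2) (b := 2) hq0 (by linarith) zero_le_two
      (by ring) hW hY).congr (ae_of_all _ fun ω => by
        simp [abs_of_nonneg (by positivity : 0 ≤ |X ω| + (|t₀| + 1) * |Y ω|), abs_mul, sq]))

variable [IsFiniteMeasure μ]

lemma integral_abs_add_rpow_le_of_condExp_eq_zero {m : MeasurableSpace Ω} (hm : m ≤ m0) {q : ℝ}
    (hq1 : 1 < q) (hq2 : q ≤ 2) {X Y : Ω → ℝ} (hXm : StronglyMeasurable[m] X)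
    (hX : MemLp X (ENNReal.ofReal q) μ) (hY : MemLp Y (ENNReal.ofReal q) μ)
    (hY0 : μ[Y|m] =ᵐ[μ] 0) :
    ∫ ω, |X ω + Y ω| ^ q ∂μ ≤ ∫ ω, |X ω| ^ q ∂μ + 2 ^ (2 - q) * ∫ ω, |Y ω| ^ q ∂μ := by
  have hq0 : 0 < q := by linarith
  have hIX := integrable_abs_rpow hq0 hX
  have hIY := (integrable_abs_rpow hq0 hY).const_mul (2 ^ (2 - q))
  have hIXY : Integrable (fun ω => |X ω| ^ q + q * (signedRpow (q - 1) (X ω) * Y ω)) μ :=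
    hIX.add ((integrable_signedRpow_mul hq1 hX hY).const_mul q)
  have horth : ∫ ω, signedRpow (q - 1) (X ω) * Y ω ∂μ = 0 :=
    integral_mul_eq_zero_of_condExp_eq_zero hm
      ((continuous_signedRpow (by linarith)).comp_stronglyMeasurable hXm)
      (integrable_signedRpow_mul hq1 hX hY)
      (hY.integrable (by simpa using hq1.le)) hY0
  calc ∫ ω, |X ω + Y ω| ^ q ∂μ
      ≤ ∫ ω, |X ω| ^ q + q * (signedRpow (q - 1) (X ω) * Y ω) + 2 ^ (2 - q) * |Y ω| ^ q ∂μ :=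
        integral_mono (integrable_abs_rpow hq0 (hX.add hY)) (hIXY.add hIY)
          fun ω => by simpa [mul_assoc] using abs_add_rpow_le hq1 hq2 (X ω) (Y ω)
    _ = ∫ ω, |X ω| ^ q ∂μ + 2 ^ (2 - q) * ∫ ω, |Y ω| ^ q ∂μ := by
        rw [integral_add hIXY hIY, integral_add hIX
          ((integrable_signedRpow_mul hq1 hX hY).const_mul q), integral_const_mul,
          integral_const_mul, horth, mul_zero, add_zero]

lemma integral_abs_add_rpow_rpow_le_of_condExp_eq_zero {m : MeasurableSpace Ω} (hm : m ≤ m0)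
    {q : ℝ} (hq : 2 ≤ q) {X Y : Ω → ℝ} (hXm : StronglyMeasurable[m] X)
    (hX : MemLp X (ENNReal.ofReal q) μ) (hY : MemLp Y (ENNReal.ofReal q) μ)
    (hY0 : μ[Y|m] =ᵐ[μ] 0) :
    (∫ ω, |X ω + Y ω| ^ q ∂μ) ^ (2 / q) ≤
      (∫ ω, |X ω| ^ q ∂μ) ^ (2 / q) + (q - 1) * (∫ ω, |Y ω| ^ q ∂μ) ^ (2 / q) := by
  have hq0 : 0 < q := by linarith
  have hq1 : 1 < q := by linarith
  rcases (integral_nonneg fun ω => by positivity : 0 ≤ ∫ ω, |X ω| ^ q ∂μ).eq_or_lt with hX0 | hX0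
  · have hXY : (fun ω => |X ω + Y ω| ^ q) =ᵐ[μ] fun ω => |Y ω| ^ q := by
      filter_upwards [(integral_eq_zero_iff_of_nonneg (fun ω => by positivity)
        (integrable_abs_rpow hq0 hX)).1 hX0.symm] with ω hω
      have : X ω = 0 := abs_eq_zero.1 ((rpow_eq_zero (abs_nonneg _) hq0.ne').1 hω)
      simp [this]
    rw [← hX0, integral_congr_ae hXY, zero_rpow (by positivity), zero_add]
    exact le_mul_of_one_le_left (by positivity) (by linarith)
  have horth : ∫ ω, signedRpow (q - 1) (X ω) * Y ω ∂μ = 0 :=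
    integral_mul_eq_zero_of_condExp_eq_zero hm
      ((continuous_signedRpow (by linarith)).comp_stronglyMeasurable hXm)
      (integrable_signedRpow_mul hq1 hX hY) (hY.integrable (by simpa using hq1.le)) hY0
  have := rpow_two_div_le_of_hasDerivAt (B := (∫ ω, |Y ω| ^ q ∂μ) ^ (2 / q)) hq
    (hasDerivAt_integral_abs_add_mul_rpow hq1 hX hY)
    (hasDerivAt_integral_signedRpow_add_mul_mul hq hX hY) (by simpa using hX0)
    (by simp only [zero_mul, add_zero, mul_assoc, integral_const_mul, horth, mul_zero])
    (fun t => integral_nonneg fun ω => by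
      have := mul_self_nonneg (Y ω)
      rw [mul_assoc _ (Y ω)]
      positivity)
    (fun t => calc
      ∫ ω, q * ((q - 1) * |X ω + t * Y ω| ^ (q - 2)) * Y ω * Y ω ∂μ
          = q * (q - 1) * ∫ ω, |X ω + t * Y ω| ^ (q - 2) * Y ω ^ 2 ∂μ := by
            rw [← integral_const_mul]
            congr 1
            funext ω
            ring
        _ ≤ q * (q - 1) * ((∫ ω, |X ω + t * Y ω| ^ q ∂μ) ^ ((q - 2) / q) *
            (∫ ω, |Y ω| ^ q ∂μ) ^ (2 / q)) := by
            gcongr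
            exact integral_abs_rpow_sub_two_mul_sq_le hq (hX.add (hY.const_mul t)) hY
        _ = _ := by ring)
  simpa using this

end Integrals

lemma apply_sum_le_mul_sum_apply_of_step {Ω : Type*} {m0 : MeasurableSpace Ω} {μ : Measure Ω}
    {ℱ : ℕ → MeasurableSpace Ω} (hmono : Monotone ℱ) {p : ENNReal} {Φ : (Ω → ℝ) → ℝ} {c : ℝ}
    (hΦ0 : Φ 0 = 0)
    (hstep : ∀ n X Y, StronglyMeasurable[ℱ n] X → MemLp X p μ → MemLp Y p μ →
      μ[Y|ℱ n] =ᵐ[μ] 0 → Φ (X + Y) ≤ Φ X + c * Φ Y)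
    {T : ℕ} {ξ : ℕ → Ω → ℝ} (hmeas : ∀ t ∈ Finset.Icc 1 T, StronglyMeasurable[ℱ t] (ξ t))
    (hLp : ∀ t ∈ Finset.Icc 1 T, MemLp (ξ t) p μ)
    (hmds : ∀ t ∈ Finset.Icc 1 T, μ[ξ t|ℱ (t - 1)] =ᵐ[μ] 0) :
    Φ (∑ t ∈ Finset.Icc 1 T, ξ t) ≤ c * ∑ t ∈ Finset.Icc 1 T, Φ (ξ t) := by
  induction T with
  | zero => simp [hΦ0]
  | succ n ih =>
    have hsub : Finset.Icc 1 n ⊆ Finset.Icc 1 (n + 1) := Finset.Icc_subset_Icc_right n.le_succ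
    have hlast : n + 1 ∈ Finset.Icc 1 (n + 1) := by simp
    rw [Finset.sum_Icc_succ_top (by omega), Finset.sum_Icc_succ_top (by omega), mul_add]
    refine (hstep n _ _ ?_ (memLp_finsetSum' _ fun t ht => hLp t (hsub ht)) (hLp _ hlast)
      (by simpa using hmds _ hlast)).trans (add_le_add_left
        (ih (fun t ht => hmeas t (hsub ht)) (fun t ht => hLp t (hsub ht))
          (fun t ht => hmds t (hsub ht))) _)
    exact Finset.stronglyMeasurable_sum _ fun t ht =>
      (hmeas t (hsub ht)).mono (hmono (Finset.mem_Icc.1 ht).2)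

lemma two_rpow_two_sub_le_inv_rpow {q : ℝ} (hq1 : 1 < q) (hq2 : q ≤ 2) :
    (2 : ℝ) ^ (2 - q) ≤ (q - 1)⁻¹ ^ q := by
  have hbernoulli : (2 : ℝ) ^ (2 - q) ≤ 3 - q := by
    have := rpow_one_add_le_one_add_mul_self (s := 1) (p := 2 - q) (by norm_num) (by linarith)
      (by linarith)
    rw [one_add_one_eq_two, mul_one] at this
    linarith
  have hinv : (q - 1)⁻¹ ≤ (q - 1)⁻¹ ^ q := by
    simpa using rpow_le_rpow_of_exponent_le ((one_le_inv₀ (by linarith)).2 (by linarith)) hq1.le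
  have : 3 - q ≤ (q - 1)⁻¹ := by
    rw [← one_div, le_div_iff₀ (by linarith)]
    nlinarith
  linarith

/-- Burkholder's inequality with explicit constant `K_q = max((q-1)⁻¹, √(q-1))`. -/
theorem burkholder_inequality
    {Ω : Type*} {m0 : MeasurableSpace Ω} (μ : Measure Ω) [IsProbabilityMeasure μ]
    (T : ℕ) (ℱ : ℕ → MeasurableSpace Ω) (hmono : Monotone ℱ) (hle : ∀ t, ℱ t ≤ m0)
    (q : ℝ) (hq : 1 < q)
    (ξ : ℕ → Ω → ℝ)
    (hmeas : ∀ t ∈ Finset.Icc 1 T, StronglyMeasurable[ℱ t] (ξ t))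
    (hLq : ∀ t ∈ Finset.Icc 1 T, MemLp (ξ t) (ENNReal.ofReal q) μ)
    (hmds : ∀ t ∈ Finset.Icc 1 T, μ[ξ t | ℱ (t - 1)] =ᵐ[μ] 0)
    (q' Kq : ℝ) (hq' : q' = min q 2) (hKq : Kq = max (q - 1)⁻¹ (Real.sqrt (q - 1))) :
    ((∫ ω, |∑ t ∈ Finset.Icc 1 T, ξ t ω| ^ q ∂μ) ^ (1 / q)) ^ q' ≤
      Kq ^ q' * ∑ t ∈ Finset.Icc 1 T, ((∫ ω, |ξ t ω| ^ q ∂μ) ^ (1 / q)) ^ q' := by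
  have hq0 : 0 < q := by linarith
  have hnorm : ∀ f : Ω → ℝ,
      ((∫ ω, |f ω| ^ q ∂μ) ^ (1 / q)) ^ q' = (∫ ω, |f ω| ^ q ∂μ) ^ (q' / q) := fun f => by
    rw [← rpow_mul (integral_nonneg fun ω => by positivity), one_div_mul_eq_div]
  simp_rw [hnorm]
  subst hq' hKq
  rcases le_total q 2 with hq2 | hq2
  · rw [min_eq_left hq2, max_eq_left ((sqrt_le_one.2 (by linarith)).trans
      ((one_le_inv₀ (by linarith)).2 (by linarith))), div_self hq0.ne']
    simp only [rpow_one]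
    have := apply_sum_le_mul_sum_apply_of_step (Φ := fun X => ∫ ω, |X ω| ^ q ∂μ) hmono
      (by simp [zero_rpow hq0.ne'])
      (fun n _ _ hXm hX hY hY0 =>
        integral_abs_add_rpow_le_of_condExp_eq_zero (hle n) hq hq2 hXm hX hY hY0)
      hmeas hLq hmds
    simp only [Finset.sum_apply] at this
    refine this.trans ?_
    gcongr
    exact two_rpow_two_sub_le_inv_rpow hq hq2
  · rw [min_eq_right hq2, max_eq_right ((inv_le_one_of_one_le₀ (by linarith)).trans
      (one_le_sqrt.2 (by linarith))), rpow_two, sq_sqrt (by linarith)]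
    simpa [Finset.sum_apply] using apply_sum_le_mul_sum_apply_of_step
      (Φ := fun X => (∫ ω, |X ω| ^ q ∂μ) ^ (2 / q)) hmono
      (by simp [zero_rpow hq0.ne', zero_rpow (div_pos two_pos hq0).ne'])
      (fun n _ _ hXm hX hY hY0 =>
        integral_abs_add_rpow_rpow_le_of_condExp_eq_zero (hle n) hq2 hXm hX hY hY0)
      hmeas hLq hmds
end

section
/- Bias bound for the difference of one-sided local weighted averages: Let c ∈ ℝ, b > 0 and M ≥ 0. Let (w⁺_t)_{t=1}^T be real weights with w⁺_t = 0 unless x_t ∈ [c, c+b], satisfying Σ_t w⁺_t = 1 and Σ_t (x_t − c) w⁺_t = 0, and let (w⁻_t)_{t=1}^T be real weights with w⁻_t = 0 unless x_t ∈ [c−b, c), satisfying Σ_t w⁻_t = 1 and Σ_t (x_t − c) w⁻_t = 0. Suppose f : ℝ → ℝ admits one-sided first-order expansions at c: there exist d₊, d₋ ∈ ℝ such that |f(y) − f(c) − d₊(y − c)| ≤ M (y − c)² for all y ∈ [c, c+b] and |f(y) − f(c) − d₋(y − c)| ≤ M (y − c)² for all y ∈ [c−b, c]. Then | Σ_{t=1}^T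 (w⁺_t − w⁻_t) f(x_t) | ≤ M b² ( Σ_t |w⁺_t| + Σ_t |w⁻_t| ). -/
/-- Bias bound for the difference of one-sided local weighted averages. -/
theorem local_linear_bias_bound
    (T : ℕ) (x : ℕ → ℝ) (c b M : ℝ) (hb : 0 < b) (hM : 0 ≤ M)
    (wp wm : ℕ → ℝ)
    (hwp_supp : ∀ t ∈ Finset.Icc 1 T, x t ∉ Set.Icc c (c + b) → wp t = 0)
    (hwp_sum : ∑ t ∈ Finset.Icc 1 T, wp t = 1)
    (hwp_lin : ∑ t ∈ Finset.Icc 1 T, (x t - c) * wp t = 0)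
    (hwm_supp : ∀ t ∈ Finset.Icc 1 T, x t ∉ Set.Ico (c - b) c → wm t = 0)
    (hwm_sum : ∑ t ∈ Finset.Icc 1 T, wm t = 1)
    (hwm_lin : ∑ t ∈ Finset.Icc 1 T, (x t - c) * wm t = 0)
    (f : ℝ → ℝ) (dp dm : ℝ)
    (hfp : ∀ y ∈ Set.Icc c (c + b), |f y - f c - dp * (y - c)| ≤ M * (y - c) ^ 2)
    (hfm : ∀ y ∈ Set.Icc (c - b) c, |f y - f c - dm * (y - c)| ≤ M * (y - c) ^ 2) :
    |∑ t ∈ Finset.Icc 1 T, (wp t - wm t) * f (x t)| ≤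
      M * b ^ 2 * ((∑ t ∈ Finset.Icc 1 T, |wp t|) + ∑ t ∈ Finset.Icc 1 T, |wm t|) := by
  set s := Finset.Icc 1 T
  set Rp : ℕ → ℝ := fun t => f (x t) - f c - dp * (x t - c)
  set Rm : ℕ → ℝ := fun t => f (x t) - f c - dm * (x t - c)
  have key : ∑ t ∈ s, (wp t - wm t) * f (x t)
      = (∑ t ∈ s, wp t * Rp t) - ∑ t ∈ s, wm t * Rm t := by
    have h1 : ∑ t ∈ s, (wp t - wm t) * f (x t)
        = (∑ t ∈ s, wp t * Rp t) - (∑ t ∈ s, wm t * Rm t)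
          + f c * ((∑ t ∈ s, wp t) - ∑ t ∈ s, wm t)
          + dp * (∑ t ∈ s, (x t - c) * wp t)
          - dm * (∑ t ∈ s, (x t - c) * wm t) := by
      simp only [Finset.mul_sum, ← Finset.sum_sub_distrib, ← Finset.sum_add_distrib]
      apply Finset.sum_congr rfl
      intro t _
      simp only [Rp, Rm]; ring
    rw [h1, hwp_sum, hwm_sum, hwp_lin, hwm_lin]; ring
  rw [key]
  have hp : ∀ t ∈ s, |wp t * Rp t| ≤ M * b ^ 2 * |wp t| := by
    intro t ht
    by_cases h : x t ∈ Set.Icc c (c + b)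
    · rw [abs_mul, mul_comm (M * b ^ 2)]
      apply mul_le_mul_of_nonneg_left _ (abs_nonneg _)
      refine (hfp _ h).trans ?_
      apply mul_le_mul_of_nonneg_left _ hM
      obtain ⟨h1, h2⟩ := h
      nlinarith
    · rw [hwp_supp t ht h]; simp
  have hm : ∀ t ∈ s, |wm t * Rm t| ≤ M * b ^ 2 * |wm t| := by
    intro t ht
    by_cases h : x t ∈ Set.Ico (c - b) c
    · rw [abs_mul, mul_comm (M * b ^ 2)]
      apply mul_le_mul_of_nonneg_left _ (abs_nonneg _)
      refine (hfm _ ⟨h.1, le_of_lt h.2⟩).trans ?_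
      apply mul_le_mul_of_nonneg_left _ hM
      obtain ⟨h1, h2⟩ := h
      nlinarith
    · rw [hwm_supp t ht h]; simp
  calc |(∑ t ∈ s, wp t * Rp t) - ∑ t ∈ s, wm t * Rm t|
      ≤ |∑ t ∈ s, wp t * Rp t| + |∑ t ∈ s, wm t * Rm t| := abs_sub _ _
    _ ≤ (∑ t ∈ s, |wp t * Rp t|) + ∑ t ∈ s, |wm t * Rm t| := by
        gcongr <;> exact Finset.abs_sum_le_sum_abs _ _
    _ ≤ (∑ t ∈ s, M * b ^ 2 * |wp t|) + ∑ t ∈ s, M * b ^ 2 * |wm t| := by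
        gcongr with t ht t ht
        · exact hp t ht
        · exact hm t ht
    _ = M * b ^ 2 * ((∑ t ∈ s, |wp t|) + ∑ t ∈ s, |wm t|) := by
        rw [← Finset.mul_sum, ← Finset.mul_sum, mul_add]
end
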